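/- Let J : ℝ → ℝ be integrable, nonnegative, even, not almost everywhere zero, with μ₂ = ∫ x²·J(x) dx < ∞. Then ψ(ξ) = sign(ξ)·√(2φ(ξ)/φ''(0)) is differentiable at every point of ℝ, ψ'(0) = 1, and |ψ'(ξ)| ≤ 1 for all ξ ∈ ℝ. -/

import Mathlib

open MeasureTheory Real FourierTransform

/-- The `k`-th moment `μ_k = ∫ x^k J(x) dx` of `J`. -/
noncomputable def momentJ (J : ℝ → ℝ) (k : ℕ) : ℝ := ∫ x : ℝ, x ^ k * J x

/-- `φ(ξ) = μ₀ − (𝓕J)(ξ)`; since `J` is real and even, `𝓕J` is real-valued,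
so we record `φ` through the real part of the Fourier transform. -/
noncomputable def phiJ (J : ℝ → ℝ) (ξ : ℝ) : ℝ :=
  momentJ J 0 - (𝓕 (fun x : ℝ => (J x : ℂ)) ξ).re

/-- The wave speed `c = √(μ₂/2)`. -/
noncomputable def speedJ (J : ℝ → ℝ) : ℝ := Real.sqrt (momentJ J 2 / 2)

/-- `ψ(ξ) = sign(ξ)·√(2 φ(ξ)/φ''(0))`, where `φ''(0) = 4π²μ₂`. -/
noncomputable def psiJ (J : ℝ → ℝ) (ξ : ℝ) : ℝ :=
  Real.sign ξ * Real.sqrt (2 * phiJ J ξ / (4 * Real.pi ^ 2 * momentJ J 2))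

/-- `s(t,ξ) = sin(2πcψ(ξ)t)/(2πcψ(ξ))`, interpreted as `t` when `ψ(ξ) = 0`. -/
noncomputable def skerJ (J : ℝ → ℝ) (t ξ : ℝ) : ℝ :=
  if psiJ J ξ = 0 then t
  else Real.sin (2 * Real.pi * speedJ J * psiJ J ξ * t) / (2 * Real.pi * speedJ J * psiJ J ξ)

/-- The Fourier representation of the solution of `u_tt + μ₀ u = J ⋆ u` with
initial data `u(0,·) = u₀`, `∂ₜu(0,·) = u₁`. -/
noncomputable def usolJ (J : ℝ → ℝ) (u₀ u₁ : SchwartzMap ℝ ℂ) (t x : ℝ) : ℂ :=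
  ∫ ξ : ℝ, Complex.exp (2 * Real.pi * Complex.I * ξ * x) *
    ((Real.cos (2 * Real.pi * speedJ J * psiJ J ξ * t) : ℂ) * 𝓕 (u₀ : ℝ → ℂ) ξ
      + (skerJ J t ξ : ℂ) * 𝓕 (u₁ : ℝ → ℂ) ξ)

/-- The Fourier representation of `D u`, where `D` is the Fourier multiplier
with symbol `2πi ψ(ξ)`. -/
noncomputable def DusolJ (J : ℝ → ℝ) (u₀ u₁ : SchwartzMap ℝ ℂ) (t x : ℝ) : ℂ :=
  ∫ ξ : ℝ, Complex.exp (2 * Real.pi * Complex.I * ξ * x) *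
    (2 * Real.pi * Complex.I * (psiJ J ξ : ℂ)) *
    ((Real.cos (2 * Real.pi * speedJ J * psiJ J ξ * t) : ℂ) * 𝓕 (u₀ : ℝ → ℂ) ξ
      + (skerJ J t ξ : ℂ) * 𝓕 (u₁ : ℝ → ℂ) ξ)

/-!
Writing `φ(ξ) = ∫ J(x) (1 - cos 2πξx) dx`, away from the origin `ψ = ±√(2φ/φ''(0))` is a
square root of a positive differentiable function, and `|ψ'| ≤ 1` amounts to
`φ'² ≤ 2 φ''(0) φ`. This is Cauchy–Schwarz for `φ'(ξ) = ∫ J(x) · 2πx · sin 2πξx dx` with respect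
to the weight `J`, followed by `sin² θ ≤ 2 (1 - cos θ)`.
At the origin, `1 - cos 2t = 2t² sinc² t` gives `ψ(ξ) = ξ √(S(ξ)/μ₂)` for all `ξ`, where
`S(ξ) = ∫ x² J(x) sinc²(πξx) dx` is continuous by dominated convergence with `S(0) = μ₂`,
so `ψ'(0) = 1`.
-/

open Filter Topology

section WeightedIntegrals

variable {α : Type*} [MeasurableSpace α] {μ : Measure α}

theorem sq_integral_mul_le_of_nonneg {w f g : α → ℝ} (hw : 0 ≤ w)
    (hf : Integrable (fun x => w x * f x ^ 2) μ) (hg : Integrable (fun x => w x * g x ^ 2) μ)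
    (hfg : Integrable (fun x => w x * (f x * g x)) μ) :
    (∫ x, w x * (f x * g x) ∂μ) ^ 2 ≤ (∫ x, w x * f x ^ 2 ∂μ) * ∫ x, w x * g x ^ 2 ∂μ := by
  have hquad : ∀ t : ℝ, 0 ≤ (∫ x, w x * f x ^ 2 ∂μ) * (t * t)
      + (-2 * ∫ x, w x * (f x * g x) ∂μ) * t + ∫ x, w x * g x ^ 2 ∂μ := by
    intro t
    have hexpand : (fun x => w x * (t * f x - g x) ^ 2) = fun x =>
        t * t * (w x * f x ^ 2) + -2 * t * (w x * (f x * g x)) + w x * g x ^ 2 := by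
      funext x; ring
    have hnonneg : 0 ≤ ∫ x, w x * (t * f x - g x) ^ 2 ∂μ :=
      integral_nonneg fun x => mul_nonneg (hw x) (sq_nonneg _)
    have hint : ∫ x, w x * (t * f x - g x) ^ 2 ∂μ = (∫ x, w x * f x ^ 2 ∂μ) * (t * t)
        + (-2 * ∫ x, w x * (f x * g x) ∂μ) * t + ∫ x, w x * g x ^ 2 ∂μ := by
      rw [hexpand, integral_add (by exact (hf.const_mul _).add (hfg.const_mul _)) hg,
        integral_add (hf.const_mul _) (hfg.const_mul _), integral_const_mul, integral_const_mul]
      ring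
    exact hint ▸ hnonneg
  have := discrim_le_zero hquad
  rw [discrim] at this
  linarith

theorem integral_mul_pos_of_ae_ne_zero {w g : α → ℝ} (hw : 0 ≤ w) (hg : 0 ≤ g)
    (hw0 : ¬ ∀ᵐ x ∂μ, w x = 0) (hg0 : ∀ᵐ x ∂μ, g x ≠ 0)
    (hint : Integrable (fun x => w x * g x) μ) : 0 < ∫ x, w x * g x ∂μ := by
  have hwg : 0 ≤ fun x => w x * g x := fun x => mul_nonneg (hw x) (hg x)
  refine (integral_nonneg hwg).lt_of_ne' fun h => hw0 ?_
  filter_upwards [(integral_eq_zero_iff_of_nonneg hwg hint).1 h, hg0] with x hx hgx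
  exact (mul_eq_zero.1 hx).resolve_right hgx

end WeightedIntegrals

theorem integrable_mul_of_integrable_sq_mul {f : ℝ → ℝ} (hf : Integrable f)
    (hf2 : Integrable fun x => x ^ 2 * f x) : Integrable fun x => x * f x := by
  refine (hf.norm.add hf2.norm).mono' (continuous_id.aestronglyMeasurable.mul hf.1) ?_
  filter_upwards with x
  simp only [norm_mul, Real.norm_eq_abs, Pi.add_apply, abs_pow, sq_abs]
  nlinarith [mul_nonneg (abs_nonneg (f x)) (sq_nonneg (|x| - 1)), sq_abs x, abs_nonneg (f x)]

theorem ae_cos_mul_ne_one {c : ℝ} (hc : c ≠ 0) : ∀ᵐ x : ℝ, cos (c * x) ≠ 1 := by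
  refine measure_mono_null (fun x (hx : ¬ cos (c * x) ≠ 1) => ?_)
    ((Set.countable_range fun n : ℤ => n * (2 * π) / c).measure_zero volume)
  obtain ⟨n, hn⟩ := (cos_eq_one_iff _).1 (not_not.1 hx)
  exact ⟨n, show (n : ℝ) * (2 * π) / c = x by rw [hn]; field_simp⟩

theorem one_sub_cos_two_mul_eq_sinc (t : ℝ) : 1 - cos (2 * t) = 2 * t ^ 2 * sinc t ^ 2 := by
  rcases eq_or_ne t 0 with rfl | ht
  · simp
  · rw [sinc_of_ne_zero ht, cos_two_mul, cos_sq']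
    field_simp
    ring

theorem eventually_sign_eq_sign {x : ℝ} (hx : x ≠ 0) :
    ∀ᶠ y in 𝓝 x, Real.sign y = Real.sign x := by
  rcases hx.lt_or_gt with h | h
  · filter_upwards [Iio_mem_nhds h] with y hy
    rw [Real.sign_of_neg hy, Real.sign_of_neg h]
  · filter_upwards [Ioi_mem_nhds h] with y hy
    rw [Real.sign_of_pos hy, Real.sign_of_pos h]

theorem abs_div_two_mul_sqrt_le_one {a b : ℝ} (h : a ^ 2 ≤ 4 * b) : |a / (2 * √b)| ≤ 1 := by
  rw [abs_div, abs_of_nonneg (by positivity : 0 ≤ 2 * √b)]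
  refine div_le_one_of_le₀ ?_ (by positivity)
  calc |a| ≤ √(2 ^ 2 * b) := abs_le_sqrt (by linarith)
    _ = 2 * √b := by rw [sqrt_mul (by positivity), sqrt_sq zero_le_two]

section

variable {J : ℝ → ℝ}

theorem phiJ_eq_integral (hJ : Integrable J) :
    phiJ J = fun ξ => ∫ x, J x * (1 - cos (2 * π * ξ * x)) := by
  funext ξ
  have hcos : Integrable fun x => cos (2 * π * ξ * x) * J x :=
    hJ.bdd_mul (by fun_prop) (Eventually.of_forall fun x => abs_cos_le_one _)
  have hre : (𝓕 (fun x : ℝ => (J x : ℂ)) ξ).re = ∫ x, cos (2 * π * ξ * x) * J x := by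
    simp_rw [Real.fourier_real_eq_integral_exp_smul, smul_eq_mul]
    rw [← RCLike.re_to_complex, ← integral_re]
    · congr 1; funext x
      rw [RCLike.re_to_complex, Complex.re_mul_ofReal, Complex.exp_ofReal_mul_I_re, ← cos_neg]
      ring_nf
    · exact hJ.ofReal.bdd_mul (c := 1) (by fun_prop)
        (Eventually.of_forall fun x => (Complex.norm_exp_ofReal_mul_I _).le)
  rw [phiJ, hre, momentJ, ← integral_sub (by simpa using hJ) hcos]
  congr 1; funext x; ring

theorem integrable_mul_one_sub_cos (hJ : Integrable J) (ξ : ℝ) :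
    Integrable fun x => J x * (1 - cos (2 * π * ξ * x)) :=
  hJ.mul_bdd (c := 2) (by fun_prop) (Eventually.of_forall fun x => by
    rw [Real.norm_eq_abs, abs_le]
    constructor <;> linarith [cos_le_one (2 * π * ξ * x), neg_one_le_cos (2 * π * ξ * x)])

theorem integrable_mul_mul_sin (hJ : Integrable J) (hmom2 : Integrable fun x => x ^ 2 * J x)
    (ξ : ℝ) : Integrable fun x => J x * (2 * π * x * sin (2 * π * ξ * x)) :=
  (((integrable_mul_of_integrable_sq_mul hJ hmom2).const_mul (2 * π)).bdd_mul (c := 1)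
    (f := fun x => sin (2 * π * ξ * x)) (by fun_prop)
    (Eventually.of_forall fun x => abs_sin_le_one _)).congr
    (Eventually.of_forall fun x => by ring)

theorem phiJ_pos (hJ : Integrable J) (hJnonneg : ∀ x, 0 ≤ J x) (hJne : ¬ ∀ᵐ x, J x = 0)
    {ξ : ℝ} (hξ : ξ ≠ 0) : 0 < phiJ J ξ := by
  rw [phiJ_eq_integral hJ]
  refine integral_mul_pos_of_ae_ne_zero hJnonneg (fun x => sub_nonneg.2 (cos_le_one _)) hJne ?_
    (integrable_mul_one_sub_cos hJ ξ)
  filter_upwards [ae_cos_mul_ne_one (c := 2 * π * ξ) (by positivity)] with x hx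
  exact sub_ne_zero.2 hx.symm

theorem momentJ_two_pos (hJnonneg : ∀ x, 0 ≤ J x) (hJne : ¬ ∀ᵐ x, J x = 0)
    (hmom2 : Integrable fun x => x ^ 2 * J x) : 0 < momentJ J 2 := by
  have hcomm : (fun x => x ^ 2 * J x) = fun x => J x * x ^ 2 := funext fun x => mul_comm _ _
  rw [momentJ, hcomm]
  refine integral_mul_pos_of_ae_ne_zero hJnonneg (fun x => sq_nonneg x) hJne ?_ (hcomm ▸ hmom2)
  filter_upwards [Measure.ae_ne volume 0] with x hx using pow_ne_zero 2 hx

theorem hasDerivAt_phiJ (hJ : Integrable J) (hmom2 : Integrable fun x => x ^ 2 * J x) (ξ : ℝ) :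
    HasDerivAt (phiJ J) (∫ x, J x * (2 * π * x * sin (2 * π * ξ * x))) ξ := by
  rw [phiJ_eq_integral hJ]
  refine (hasDerivAt_integral_of_dominated_loc_of_deriv_le (bound := fun x => 2 * π * ‖x * J x‖)
    (F' := fun η x => J x * (2 * π * x * sin (2 * π * η * x)))
    univ_mem (Eventually.of_forall fun η => (integrable_mul_one_sub_cos hJ η).1)
    (integrable_mul_one_sub_cos hJ ξ) (integrable_mul_mul_sin hJ hmom2 ξ).1 ?_
    ((integrable_mul_of_integrable_sq_mul hJ hmom2).norm.const_mul _) ?_).2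
  · filter_upwards with x η _
    have hnorm : ‖J x * (2 * π * x * sin (2 * π * η * x))‖
        = 2 * π * ‖x * J x‖ * |sin (2 * π * η * x)| := by
      simp only [norm_mul, Real.norm_eq_abs, abs_two, abs_of_pos pi_pos]
      ring
    rw [hnorm]
    exact mul_le_of_le_one_right (by positivity) (abs_sin_le_one _)
  · filter_upwards with x η _
    exact (((((hasDerivAt_id' η).const_mul (2 * π)).mul_const x).cos.const_sub 1).const_mul
      (J x)).congr_deriv (by ring)

theorem sq_deriv_phiJ_le (hJ : Integrable J) (hJnonneg : ∀ x, 0 ≤ J x)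
    (hmom2 : Integrable fun x => x ^ 2 * J x) (ξ : ℝ) :
    (∫ x, J x * (2 * π * x * sin (2 * π * ξ * x))) ^ 2
      ≤ 2 * (4 * π ^ 2 * momentJ J 2) * phiJ J ξ := by
  have hsin : Integrable fun x => J x * sin (2 * π * ξ * x) ^ 2 :=
    hJ.mul_bdd (c := 1) (by fun_prop) (Eventually.of_forall fun x => by
      rw [norm_pow, Real.norm_eq_abs]; exact pow_le_one₀ (abs_nonneg _) (abs_sin_le_one _))
  have hmom : ∫ x, J x * (2 * π * x) ^ 2 = 4 * π ^ 2 * momentJ J 2 := by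
    rw [momentJ, ← integral_const_mul]; congr 1; funext x; ring
  have hsin_le : ∫ x, J x * sin (2 * π * ξ * x) ^ 2 ≤ 2 * phiJ J ξ := by
    rw [phiJ_eq_integral hJ, ← integral_const_mul]
    refine integral_mono hsin ((integrable_mul_one_sub_cos hJ ξ).const_mul 2) fun x => ?_
    rw [sin_sq]
    nlinarith [mul_nonneg (hJnonneg x) (sq_nonneg (1 - cos (2 * π * ξ * x)))]
  calc _ ≤ (∫ x, J x * (2 * π * x) ^ 2) * ∫ x, J x * sin (2 * π * ξ * x) ^ 2 :=
        sq_integral_mul_le_of_nonneg hJnonneg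
          ((hmom2.const_mul (4 * π ^ 2)).congr (Eventually.of_forall fun x => by ring)) hsin
          (integrable_mul_mul_sin hJ hmom2 ξ)
    _ ≤ (4 * π ^ 2 * momentJ J 2) * (2 * phiJ J ξ) := by
      rw [hmom]
      refine mul_le_mul_of_nonneg_left hsin_le (mul_nonneg (by positivity) ?_)
      exact integral_nonneg fun x => mul_nonneg (sq_nonneg x) (hJnonneg x)
    _ = _ := by ring

theorem phiJ_eq_mul_integral_sinc (hJ : Integrable J) (ξ : ℝ) :
    phiJ J ξ = 2 * π ^ 2 * ξ ^ 2 * ∫ x, x ^ 2 * J x * sinc (π * ξ * x) ^ 2 := by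
  rw [phiJ_eq_integral hJ, ← integral_const_mul]
  refine integral_congr_ae (Eventually.of_forall fun x => ?_)
  dsimp only
  rw [show 2 * π * ξ * x = 2 * (π * ξ * x) by ring, one_sub_cos_two_mul_eq_sinc]
  ring

theorem continuous_integral_sinc (hmom2 : Integrable fun x => x ^ 2 * J x) :
    Continuous fun ξ => ∫ x, x ^ 2 * J x * sinc (π * ξ * x) ^ 2 := by
  refine continuous_of_dominated (bound := fun x => ‖x ^ 2 * J x‖)
    (fun ξ => hmom2.1.mul ((continuous_sinc.comp (by fun_prop)).pow 2).aestronglyMeasurable)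
    (fun ξ => Eventually.of_forall fun x => ?_) hmom2.norm
    (Eventually.of_forall fun x =>
      continuous_const.mul ((continuous_sinc.comp (by fun_prop)).pow 2))
  rw [norm_mul, norm_pow, Real.norm_eq_abs (sinc _)]
  exact mul_le_of_le_one_right (norm_nonneg _) (pow_le_one₀ (abs_nonneg _) (abs_sinc_le_one _))

theorem psiJ_eq_mul_sqrt (hJ : Integrable J) (ξ : ℝ) :
    psiJ J ξ = ξ * √((∫ x, x ^ 2 * J x * sinc (π * ξ * x) ^ 2) / momentJ J 2) := by
  rw [psiJ, phiJ_eq_mul_integral_sinc hJ,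
    show ∀ S : ℝ, 2 * (2 * π ^ 2 * ξ ^ 2 * S) / (4 * π ^ 2 * momentJ J 2)
      = ξ ^ 2 * (S / momentJ J 2) by intro S; field_simp; ring,
    sqrt_mul (sq_nonneg ξ), sqrt_sq_eq_abs, ← mul_assoc]
  congr 1
  rcases lt_trichotomy ξ 0 with h | rfl | h
  · rw [Real.sign_of_neg h, abs_of_neg h]; ring
  · simp
  · rw [Real.sign_of_pos h, abs_of_pos h, one_mul]

theorem hasDerivAt_psiJ_zero (hJ : Integrable J) (hJnonneg : ∀ x, 0 ≤ J x)
    (hJne : ¬ ∀ᵐ x, J x = 0) (hmom2 : Integrable fun x => x ^ 2 * J x) :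
    HasDerivAt (psiJ J) 1 0 := by
  have hlim : Tendsto (fun ξ => √((∫ x, x ^ 2 * J x * sinc (π * ξ * x) ^ 2) / momentJ J 2))
      (𝓝 0) (𝓝 1) := by
    have h := (((continuous_integral_sinc hmom2).div_const (momentJ J 2)).sqrt).tendsto 0
    simp only [mul_zero, zero_mul, sinc_zero, one_pow, mul_one] at h
    rwa [← momentJ, div_self (momentJ_two_pos hJnonneg hJne hmom2).ne', sqrt_one] at h
  rw [hasDerivAt_iff_tendsto_slope_zero]
  refine (hlim.mono_left nhdsWithin_le_nhds).congr' ?_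
  filter_upwards [self_mem_nhdsWithin] with t (ht : t ≠ 0)
  rw [zero_add, psiJ_eq_mul_sqrt hJ, psiJ_eq_mul_sqrt hJ, zero_mul, sub_zero, smul_eq_mul,
    inv_mul_cancel_left₀ ht]

theorem exists_hasDerivAt_psiJ_of_ne_zero (hJ : Integrable J) (hJnonneg : ∀ x, 0 ≤ J x)
    (hJne : ¬ ∀ᵐ x, J x = 0) (hmom2 : Integrable fun x => x ^ 2 * J x) {ξ : ℝ} (hξ : ξ ≠ 0) :
    ∃ d, HasDerivAt (psiJ J) d ξ ∧ |d| ≤ 1 := by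
  set A := 4 * π ^ 2 * momentJ J 2
  set dφ := ∫ x, J x * (2 * π * x * sin (2 * π * ξ * x))
  have hA : 0 < A := by have := momentJ_two_pos hJnonneg hJne hmom2; positivity
  have hg : HasDerivAt (fun η => 2 * phiJ J η / A) (2 * dφ / A) ξ :=
    ((hasDerivAt_phiJ hJ hmom2 ξ).const_mul 2).div_const A
  have hg_pos : 0 < 2 * phiJ J ξ / A := by
    have := phiJ_pos hJ hJnonneg hJne hξ; positivity
  have hpsi : psiJ J =ᶠ[𝓝 ξ] fun η => Real.sign ξ * √(2 * phiJ J η / A) := by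
    filter_upwards [eventually_sign_eq_sign hξ] with η hη
    rw [psiJ, hη]
  refine ⟨_, ((hg.sqrt hg_pos.ne').const_mul (Real.sign ξ)).congr_of_eventuallyEq hpsi, ?_⟩
  have hsign : |Real.sign ξ| ≤ 1 := by
    rcases Real.sign_apply_eq ξ with h | h | h <;> simp [h]
  rw [abs_mul]
  refine mul_le_one₀ hsign (abs_nonneg _) (abs_div_two_mul_sqrt_le_one ?_)
  calc (2 * dφ / A) ^ 2 = 4 * dφ ^ 2 / A ^ 2 := by ring
    _ ≤ 4 * (2 * A * phiJ J ξ) / A ^ 2 := by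
      gcongr; exact sq_deriv_phiJ_le hJ hJnonneg hmom2 ξ
    _ = 4 * (2 * phiJ J ξ / A) := by field_simp

end

theorem psiJ_differentiable_deriv_le_one_general
    (J : ℝ → ℝ) (hJint : Integrable J) (hJnonneg : ∀ x, 0 ≤ J x)
    (hJne : ¬ (∀ᵐ x : ℝ ∂volume, J x = 0))
    (hmom2 : Integrable (fun x : ℝ => x ^ 2 * J x)) :
    Differentiable ℝ (psiJ J) ∧ deriv (psiJ J) 0 = 1 ∧
      ∀ ξ : ℝ, |deriv (psiJ J) ξ| ≤ 1 := by
  have hzero := hasDerivAt_psiJ_zero hJint hJnonneg hJne hmom2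
  have key : ∀ ξ, ∃ d, HasDerivAt (psiJ J) d ξ ∧ |d| ≤ 1 := fun ξ => by
    rcases eq_or_ne ξ 0 with rfl | hξ
    · exact ⟨1, hzero, abs_one.le⟩
    · exact exists_hasDerivAt_psiJ_of_ne_zero hJint hJnonneg hJne hmom2 hξ
  refine ⟨fun ξ => (key ξ).choose_spec.1.differentiableAt, hzero.deriv, fun ξ => ?_⟩
  obtain ⟨d, hd, hle⟩ := key ξ
  rwa [hd.deriv]

/-- The function `ψ(ξ) = sign(ξ)·√(2φ(ξ)/φ''(0))` is
differentiable everywhere, with `ψ'(0) = 1` and `|ψ'| ≤ 1`. -/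
theorem psiJ_differentiable_deriv_le_one
    (J : ℝ → ℝ) (hJint : Integrable J) (hJnonneg : ∀ x, 0 ≤ J x)
    (hJeven : ∀ x, J (-x) = J x) (hJne : ¬ (∀ᵐ x : ℝ ∂volume, J x = 0))
    (hmom2 : Integrable (fun x : ℝ => x ^ 2 * J x)) :
    Differentiable ℝ (psiJ J) ∧ deriv (psiJ J) 0 = 1 ∧
      ∀ ξ : ℝ, |deriv (psiJ J) ξ| ≤ 1 :=
  psiJ_differentiable_deriv_le_one_general J hJint hJnonneg hJne hmom2
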